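/- There is a well-defined group homomorphism π : L(6,3,2) → L(3,3,3) with π(u1) = y3, π(u2) = y1 + y2, π(u3) = c (the canonical element of L(3,3,3)), and its kernel is the cyclic group of order 2 generated by 3u1 + u3 - c', where c' is the canonical element of L(6,3,2). -/

import Mathlib

/-- Relations subgroup for the string group of weight type `p`:
generated by the elements `p i • x i - p 0 • x 0`. -/
noncomputable def stringRels (t : ℕ) (p : Fin (t + 1) → ℕ) :
    AddSubgroup (Fin (t + 1) →₀ ℤ) :=
  AddSubgroup.closure (Set.range fun i : Fin (t + 1) =>
    Finsupp.single i (p i : ℤ) - Finsupp.single 0 (p 0 : ℤ))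

/-- The string group `L(p)`. -/
abbrev StringGroup (t : ℕ) (p : Fin (t + 1) → ℕ) :=
  (Fin (t + 1) →₀ ℤ) ⧸ stringRels t p

/-- The generator `x_i` of the string group. -/
noncomputable def gen (t : ℕ) (p : Fin (t + 1) → ℕ) (i : Fin (t + 1)) :
    StringGroup t p :=
  QuotientAddGroup.mk (Finsupp.single i 1)

/-- The canonical element `c = p_i • x_i` of the string group. -/
noncomputable def can (t : ℕ) (p : Fin (t + 1) → ℕ) : StringGroup t p :=
  (p 0 : ℤ) • gen t p 0

/-!
Every map out of `L(p)` below comes from its universal property: a family `a` with all `p i • a i`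
equal defines a homomorphism. Besides `π`, the assignment `y₁ ↦ u₁, y₂ ↦ u₂ - u₁, y₃ ↦ u₁`
respects the relations of `L(3,3,3)` (as `3u₂ = 6u₁`), and the composite
`L(6,3,2) → L(3,3,3) → L(6,3,2)` fixes `u₁, u₂` and sends `u₃` to `c = 3y₁ ↦ 3u₁`.
So modulo `k = u₃ - 3u₁ = 3u₁ + u₃ - c'` the composite is the identity, whence `ker π ≤ ⟨k⟩`.
Conversely `π k = c - 3y₃ = 0` and `2k = c' - c' = 0`, while `k ≠ 0` because the parity of the
`u₁`-coordinate is well defined on `L(6,3,2)`. In Lean the generators are indexed from `0`: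
`uᵢ` is `gen 2 ![6, 3, 2] (i - 1)`.
-/

theorem AddMonoidHom.ker_le_of_comp_eq_mk' {G H : Type*} [AddGroup G] [AddZeroClass H]
    {N : AddSubgroup G} [N.Normal] {f : G →+ H} {φ : H →+ G ⧸ N}
    (h : φ.comp f = QuotientAddGroup.mk' N) : f.ker ≤ N := fun x hx => by
  rw [← QuotientAddGroup.ker_mk' N, AddMonoidHom.mem_ker, ← h, AddMonoidHom.comp_apply,
    f.mem_ker.mp hx, map_zero]

namespace StringGroup

theorem smul_gen_eq_can (t : ℕ) (p : Fin (t + 1) → ℕ) (i : Fin (t + 1)) :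
    (p i : ℤ) • gen t p i = can t p := by
  rw [can, gen, gen, ← QuotientAddGroup.mk_zsmul, ← QuotientAddGroup.mk_zsmul,
    QuotientAddGroup.eq_iff_sub_mem, Finsupp.smul_single_one, Finsupp.smul_single_one]
  exact AddSubgroup.subset_closure ⟨i, rfl⟩

variable {t : ℕ} {p : Fin (t + 1) → ℕ}

section Lift

variable {A : Type*} [AddCommGroup A]

noncomputable def lift (a : Fin (t + 1) → A) (ha : ∀ i, (p i : ℤ) • a i = (p 0 : ℤ) • a 0) :
    StringGroup t p →+ A :=
  QuotientAddGroup.lift _ (Finsupp.liftAddHom fun i => zmultiplesHom A (a i)) <| by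
    refine (AddSubgroup.closure_le _).mpr ?_
    rintro _ ⟨i, rfl⟩
    simp only [SetLike.mem_coe, AddMonoidHom.mem_ker, map_sub, Finsupp.liftAddHom_apply_single,
      zmultiplesHom_apply, ha i, sub_self]

@[simp]
theorem lift_gen (a : Fin (t + 1) → A) (ha : ∀ i, (p i : ℤ) • a i = (p 0 : ℤ) • a 0)
    (i : Fin (t + 1)) : lift a ha (gen t p i) = a i := by
  show Finsupp.liftAddHom (fun i => zmultiplesHom A (a i)) (Finsupp.single i 1) = a i
  rw [Finsupp.liftAddHom_apply_single, zmultiplesHom_apply, one_smul]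

end Lift

theorem hom_ext {M : Type*} [AddMonoid M] {f g : StringGroup t p →+ M}
    (h : ∀ i, f (gen t p i) = g (gen t p i)) : f = g :=
  QuotientAddGroup.addMonoidHom_ext _ <| Finsupp.addHom_ext' fun i => AddMonoidHom.ext_int (h i)

end StringGroup

open StringGroup

theorem smul_gen_333 (i : Fin 3) : (3 : ℤ) • gen 2 ![3, 3, 3] i = can 2 ![3, 3, 3] := by
  fin_cases i <;> exact smul_gen_eq_can 2 ![3, 3, 3] _

theorem smul_gen_632_zero : (6 : ℤ) • gen 2 ![6, 3, 2] 0 = can 2 ![6, 3, 2] :=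
  smul_gen_eq_can 2 ![6, 3, 2] 0

theorem smul_gen_632_one : (3 : ℤ) • gen 2 ![6, 3, 2] 1 = can 2 ![6, 3, 2] :=
  smul_gen_eq_can 2 ![6, 3, 2] 1

theorem smul_gen_632_two : (2 : ℤ) • gen 2 ![6, 3, 2] 2 = can 2 ![6, 3, 2] :=
  smul_gen_eq_can 2 ![6, 3, 2] 2

noncomputable def pi632 : StringGroup 2 ![6, 3, 2] →+ StringGroup 2 ![3, 3, 3] :=
  lift ![gen 2 ![3, 3, 3] 2, gen 2 ![3, 3, 3] 0 + gen 2 ![3, 3, 3] 1, can 2 ![3, 3, 3]] <| by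
    intro i
    fin_cases i
    · rfl
    · show (3 : ℤ) • (gen 2 ![3, 3, 3] 0 + gen 2 ![3, 3, 3] 1) = (6 : ℤ) • gen 2 ![3, 3, 3] 2
      linear_combination (norm := module)
        smul_gen_333 0 + smul_gen_333 1 - (2 : ℤ) • smul_gen_333 2
    · show (2 : ℤ) • can 2 ![3, 3, 3] = (6 : ℤ) • gen 2 ![3, 3, 3] 2
      linear_combination (norm := module) (-2 : ℤ) • smul_gen_333 2

theorem pi632_gen_zero : pi632 (gen 2 ![6, 3, 2] 0) = gen 2 ![3, 3, 3] 2 :=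
  lift_gen _ _ 0

theorem pi632_gen_one :
    pi632 (gen 2 ![6, 3, 2] 1) = gen 2 ![3, 3, 3] 0 + gen 2 ![3, 3, 3] 1 :=
  lift_gen _ _ 1

theorem pi632_gen_two : pi632 (gen 2 ![6, 3, 2] 2) = can 2 ![3, 3, 3] :=
  lift_gen _ _ 2

noncomputable def kernelGen : StringGroup 2 ![6, 3, 2] :=
  gen 2 ![6, 3, 2] 2 - (3 : ℤ) • gen 2 ![6, 3, 2] 0

theorem kernelGen_eq :
    (3 : ℤ) • gen 2 ![6, 3, 2] 0 + gen 2 ![6, 3, 2] 2 - can 2 ![6, 3, 2] = kernelGen := by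
  rw [kernelGen]
  linear_combination (norm := module) smul_gen_632_zero

theorem pi632_kernelGen : pi632 kernelGen = 0 := by
  rw [kernelGen, map_sub, map_zsmul, pi632_gen_zero, pi632_gen_two, smul_gen_333, sub_self]

theorem two_smul_kernelGen : (2 : ℕ) • kernelGen = 0 := by
  rw [kernelGen]
  linear_combination (norm := module) smul_gen_632_two - smul_gen_632_zero

theorem kernelGen_ne_zero : kernelGen ≠ 0 := by
  let parity : StringGroup 2 ![6, 3, 2] →+ ZMod 2 := lift ![1, 0, 0] (by decide)
  have h : parity kernelGen = 1 := by
    rw [kernelGen, map_sub, map_zsmul, lift_gen, lift_gen]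
    decide
  intro h0
  rw [h0, map_zero] at h
  exact zero_ne_one h

noncomputable def pi632QuasiInv : StringGroup 2 ![3, 3, 3] →+ StringGroup 2 ![6, 3, 2] :=
  lift ![gen 2 ![6, 3, 2] 0, gen 2 ![6, 3, 2] 1 - gen 2 ![6, 3, 2] 0, gen 2 ![6, 3, 2] 0] <| by
    intro i
    fin_cases i
    · rfl
    · show (3 : ℤ) • (gen 2 ![6, 3, 2] 1 - gen 2 ![6, 3, 2] 0) = (3 : ℤ) • gen 2 ![6, 3, 2] 0
      linear_combination (norm := module) smul_gen_632_one - smul_gen_632_zero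
    · rfl

theorem mk_pi632QuasiInv_pi632 :
    ((QuotientAddGroup.mk' (AddSubgroup.zmultiples kernelGen)).comp pi632QuasiInv).comp pi632 =
      QuotientAddGroup.mk' (AddSubgroup.zmultiples kernelGen) := by
  apply hom_ext
  intro i
  fin_cases i
  · simp [pi632_gen_zero, pi632QuasiInv]
  · simp [pi632_gen_one, pi632QuasiInv]
  · simp only [Fin.reduceFinMk, AddMonoidHom.coe_comp, Function.comp_apply, pi632_gen_two, can,
      pi632QuasiInv, map_zsmul, lift_gen, QuotientAddGroup.coe_mk', Matrix.cons_val_zero,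
      Nat.cast_ofNat]
    rw [QuotientAddGroup.eq_iff_sub_mem, ← neg_sub]
    exact neg_mem (AddSubgroup.mem_zmultiples _)

theorem stmt_16 :
    ∃ π : StringGroup 2 ![6, 3, 2] →+ StringGroup 2 ![3, 3, 3],
      π (gen 2 ![6, 3, 2] 0) = gen 2 ![3, 3, 3] 2 ∧
      π (gen 2 ![6, 3, 2] 1) = gen 2 ![3, 3, 3] 0 + gen 2 ![3, 3, 3] 1 ∧
      π (gen 2 ![6, 3, 2] 2) = can 2 ![3, 3, 3] ∧
      π.ker = AddSubgroup.zmultiples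
        ((3 : ℤ) • gen 2 ![6, 3, 2] 0 + gen 2 ![6, 3, 2] 2 - can 2 ![6, 3, 2]) ∧
      addOrderOf
        ((3 : ℤ) • gen 2 ![6, 3, 2] 0 + gen 2 ![6, 3, 2] 2 - can 2 ![6, 3, 2]) = 2 := by
  rw [kernelGen_eq]
  refine ⟨pi632, pi632_gen_zero, pi632_gen_one, pi632_gen_two, ?_,
    addOrderOf_eq_prime two_smul_kernelGen kernelGen_ne_zero⟩
  exact le_antisymm (AddMonoidHom.ker_le_of_comp_eq_mk' mk_pi632QuasiInv_pi632)
    (AddSubgroup.zmultiples_le.mpr pi632_kernelGen)
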